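/- arXiv:2505.23560 — 3 statements merged into one kernel-verified Lean document; each statement's English description precedes it below -/
import Mathlib

section
/- For every natural number d and every real ρ > 0, adding a server strictly decreases the blocking probability: B(d+1, ρ) < B(d, ρ). -/
/-- The Erlang B blocking probability for `d` servers and traffic intensity `ρ`:
`B(d, ρ) = (ρ^d / d!) / (∑_{n=0}^{d} ρ^n / n!)`. -/
noncomputable def erlangB (d : ℕ) (ρ : ℝ) : ℝ :=
  (ρ ^ d / (Nat.factorial d : ℝ)) / (∑ n ∈ Finset.range (d + 1), ρ ^ n / (Nat.factorial n : ℝ))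

/-- For every natural number `d` and every real `ρ > 0`, adding a server strictly decreases
the blocking probability: `B(d+1, ρ) < B(d, ρ)`. -/
theorem erlangB_strict_anti_in_servers (d : ℕ) (ρ : ℝ) (hρ : 0 < ρ) :
    erlangB (d + 1) ρ < erlangB d ρ := by
  set S : ℕ → ℝ := fun k => ∑ n ∈ Finset.range (k + 1), ρ ^ n / (Nat.factorial n : ℝ) with hSdef
  have hS : ∀ k : ℕ, 0 < S k := by
    intro k
    apply Finset.sum_pos
    · intro i _
      have : 0 < (Nat.factorial i : ℝ) := by exact_mod_cast Nat.factorial_pos i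
      positivity
    · exact Finset.nonempty_range_add_one
  have key : ρ * S d < ((d : ℝ) + 1) * S (d + 1) := by
    have h1 : ρ * S d = ∑ n ∈ Finset.range (d + 1), ρ ^ (n + 1) / (Nat.factorial n : ℝ) := by
      rw [hSdef, Finset.mul_sum]
      exact Finset.sum_congr rfl fun n _ => by ring
    have h2 : S (d + 1)
        = (∑ n ∈ Finset.range (d + 1), ρ ^ (n + 1) / (Nat.factorial (n + 1) : ℝ)) + 1 := by
      simp only [hSdef]
      conv_lhs => rw [Finset.sum_range_succ']
      norm_num
    have h3 : ∑ n ∈ Finset.range (d + 1), ρ ^ (n + 1) / (Nat.factorial n : ℝ)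
        ≤ ((d : ℝ) + 1) * ∑ n ∈ Finset.range (d + 1), ρ ^ (n + 1) / (Nat.factorial (n + 1) : ℝ) := by
      rw [Finset.mul_sum]
      apply Finset.sum_le_sum
      intro n hn
      have hnd : (n : ℝ) + 1 ≤ (d : ℝ) + 1 := by
        have := Finset.mem_range.mp hn
        exact_mod_cast Nat.succ_le_succ (Nat.lt_succ_iff.mp this)
      have hfn : 0 < (Nat.factorial n : ℝ) := by exact_mod_cast Nat.factorial_pos n
      have hfact : (Nat.factorial (n + 1) : ℝ) = ((n : ℝ) + 1) * (Nat.factorial n : ℝ) := by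
        push_cast [Nat.factorial_succ]; ring
      have e : ρ ^ (n + 1) / (Nat.factorial n : ℝ)
          = ((n : ℝ) + 1) * (ρ ^ (n + 1) / (Nat.factorial (n + 1) : ℝ)) := by
        rw [hfact]; field_simp
      rw [e]
      have hpos : 0 ≤ ρ ^ (n + 1) / (Nat.factorial (n + 1) : ℝ) := by
        have : 0 < (Nat.factorial (n + 1) : ℝ) := by exact_mod_cast Nat.factorial_pos (n + 1)
        positivity
      exact mul_le_mul_of_nonneg_right hnd hpos
    have hd1 : (0 : ℝ) < (d : ℝ) + 1 := by positivity
    nlinarith [h3, h1, h2]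
  have hfd : 0 < (Nat.factorial d : ℝ) := by exact_mod_cast Nat.factorial_pos d
  have hfd1 : (Nat.factorial (d + 1) : ℝ) = ((d : ℝ) + 1) * (Nat.factorial d : ℝ) := by
    push_cast [Nat.factorial_succ]; ring
  unfold erlangB
  rw [show (∑ n ∈ Finset.range (d + 1 + 1), ρ ^ n / (Nat.factorial n : ℝ)) = S (d + 1) from rfl,
    show (∑ n ∈ Finset.range (d + 1), ρ ^ n / (Nat.factorial n : ℝ)) = S d from rfl,
    div_div, div_div, div_lt_div_iff₀ (by positivity) (by positivity)]
  rw [hfd1, pow_succ]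
  nlinarith [mul_lt_mul_of_pos_left key (mul_pos (pow_pos hρ d) hfd), hS d, hS (d + 1)]
end

section
/- The maximum allowable traffic intensity ρ_{αd} is strictly increasing in the number of servers d: for every real α with 0 < α < 1 and every natural number d ≥ 1, if ρ_d and ρ_{d+1} are the unique positive reals with B(d, ρ_d) = α and B(d+1, ρ_{d+1}) = α, then ρ_d < ρ_{d+1}. -/
lemma erlangS_pos (d : ℕ) {ρ : ℝ} (hρ : 0 ≤ ρ) :
    0 < ∑ n ∈ Finset.range (d + 1), ρ ^ n / (Nat.factorial n : ℝ) := by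
  apply Finset.sum_pos'
  · intro i _
    positivity
  · exact ⟨0, Finset.mem_range.mpr (Nat.succ_pos d), by norm_num⟩

lemma pow_cross {x y : ℝ} (hx : 0 ≤ x) (hxy : x ≤ y) {n d : ℕ} (hnd : n ≤ d) :
    x ^ d * y ^ n ≤ y ^ d * x ^ n := by
  obtain ⟨k, rfl⟩ := Nat.exists_eq_add_of_le hnd
  have h1 : x ^ k ≤ y ^ k := pow_le_pow_left₀ hx hxy k
  rw [pow_add, pow_add]
  have h2 : 0 ≤ x ^ n * y ^ n := mul_nonneg (pow_nonneg hx n) (pow_nonneg (hx.trans hxy) n)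
  calc x ^ n * x ^ k * y ^ n = (x ^ n * y ^ n) * x ^ k := by ring
    _ ≤ (x ^ n * y ^ n) * y ^ k := mul_le_mul_of_nonneg_left h1 h2
    _ = y ^ n * y ^ k * x ^ n := by ring

lemma erlangB_mono {d : ℕ} (hd : 1 ≤ d) {x y : ℝ} (hx : 0 < x) (hxy : x < y) :
    erlangB d x < erlangB d y := by
  have hy : 0 < y := hx.trans hxy
  unfold erlangB
  rw [div_lt_div_iff₀ (erlangS_pos d hx.le) (erlangS_pos d hy.le),
    Finset.mul_sum, Finset.mul_sum]
  apply Finset.sum_lt_sum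
  · intro n hn
    have hnd : n ≤ d := Nat.lt_succ_iff.mp (Finset.mem_range.mp hn)
    rw [div_mul_div_comm, div_mul_div_comm, div_le_div_iff₀ (by positivity) (by positivity)]
    have := pow_cross hx.le hxy.le hnd
    nlinarith [mul_pos (Nat.cast_pos.mpr d.factorial_pos : (0:ℝ) < d.factorial)
      (Nat.cast_pos.mpr n.factorial_pos : (0:ℝ) < n.factorial)]
  · refine ⟨0, Finset.mem_range.mpr (Nat.succ_pos d), ?_⟩
    simp only [pow_zero, Nat.factorial_zero, Nat.cast_one, div_one, mul_one]
    have hlt : x ^ d < y ^ d := pow_lt_pow_left₀ hxy hx.le (by omega)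
    have hf : (0:ℝ) < d.factorial := Nat.cast_pos.mpr d.factorial_pos
    gcongr

lemma erlangB_succ_lt (d : ℕ) {ρ : ℝ} (hρ : 0 < ρ) :
    erlangB (d + 1) ρ < erlangB d ρ := by
  unfold erlangB
  rw [div_lt_div_iff₀ (erlangS_pos (d + 1) hρ.le) (erlangS_pos d hρ.le)]
  have hsplit : ∑ n ∈ Finset.range (d + 1 + 1), ρ ^ n / (Nat.factorial n : ℝ)
      = (∑ i ∈ Finset.range (d + 1), ρ ^ (i + 1) / (Nat.factorial (i + 1) : ℝ)) + 1 := by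
    rw [Finset.sum_range_succ']
    norm_num
  rw [hsplit, mul_add, mul_one, Finset.mul_sum, Finset.mul_sum]
  have hterm : ∀ i ∈ Finset.range (d + 1),
      ρ ^ (d + 1) / (Nat.factorial (d + 1) : ℝ) * (ρ ^ i / (Nat.factorial i : ℝ))
        ≤ ρ ^ d / (Nat.factorial d : ℝ) * (ρ ^ (i + 1) / (Nat.factorial (i + 1) : ℝ)) := by
    intro i hi
    have hid : i ≤ d := Nat.lt_succ_iff.mp (Finset.mem_range.mp hi)
    rw [div_mul_div_comm, div_mul_div_comm, ← pow_add, ← pow_add,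
      show d + 1 + i = d + (i + 1) by ring]
    have hden : (Nat.factorial d : ℝ) * (Nat.factorial (i + 1) : ℝ)
        ≤ (Nat.factorial (d + 1) : ℝ) * (Nat.factorial i : ℝ) := by
      have : Nat.factorial d * Nat.factorial (i + 1) ≤ Nat.factorial (d + 1) * Nat.factorial i := by
        rw [Nat.factorial_succ, Nat.factorial_succ]
        calc Nat.factorial d * ((i + 1) * Nat.factorial i)
            = (i + 1) * (Nat.factorial d * Nat.factorial i) := by ring
          _ ≤ (d + 1) * (Nat.factorial d * Nat.factorial i) := by
              exact Nat.mul_le_mul_right _ (by omega)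
          _ = (d + 1) * Nat.factorial d * Nat.factorial i := by ring
      exact_mod_cast this
    have h1 : (0:ℝ) < (Nat.factorial d : ℝ) * (Nat.factorial (i + 1) : ℝ) := by positivity
    exact div_le_div_of_nonneg_left (by positivity) h1 hden |>.trans_eq rfl
  calc ∑ i ∈ Finset.range (d + 1),
          ρ ^ (d + 1) / (Nat.factorial (d + 1) : ℝ) * (ρ ^ i / (Nat.factorial i : ℝ))
      ≤ ∑ i ∈ Finset.range (d + 1),
          ρ ^ d / (Nat.factorial d : ℝ) * (ρ ^ (i + 1) / (Nat.factorial (i + 1) : ℝ)) :=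
        Finset.sum_le_sum hterm
    _ < (∑ i ∈ Finset.range (d + 1),
          ρ ^ d / (Nat.factorial d : ℝ) * (ρ ^ (i + 1) / (Nat.factorial (i + 1) : ℝ)))
          + ρ ^ d / (Nat.factorial d : ℝ) := by
        have : (0:ℝ) < ρ ^ d / (Nat.factorial d : ℝ) := by positivity
        linarith

/-- The maximum allowable traffic intensity `ρ_{αd}` is strictly increasing in the number of
servers `d`: for every `α ∈ (0,1)` and every `d ≥ 1`, if `ρd` and `ρd1` are the unique
positive reals with `B(d, ρd) = α` and `B(d+1, ρd1) = α`, then `ρd < ρd1`. -/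
theorem erlangB_threshold_strictMono_in_servers (α : ℝ) (hα0 : 0 < α) (hα1 : α < 1)
    (d : ℕ) (hd : 1 ≤ d) (ρd ρd1 : ℝ) (hρd : 0 < ρd) (hρd1 : 0 < ρd1)
    (hBd : erlangB d ρd = α) (hBd1 : erlangB (d + 1) ρd1 = α) :
    ρd < ρd1 := by
  by_contra h
  push_neg at h
  have key : erlangB (d + 1) ρd1 ≤ erlangB (d + 1) ρd := by
    rcases eq_or_lt_of_le h with heq | hlt
    · rw [heq]
    · exact (erlangB_mono (by omega) hρd1 hlt).le
  have := erlangB_succ_lt d hρd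
  rw [hBd1, hBd] at *
  linarith [key.trans_lt this]
end

section
/- Let N ≥ 1 be a natural number, let ρ : {0, 1, …, N} → ℝ satisfy ρ(0) = 0, let z : {1, …, N} → {0, 1} satisfy z(n) ≤ z(n−1) for all n ∈ {2, …, N} with d = Σ_{n=1}^{N} z(n), and let T ≥ 0 and λ̂ > 0 be reals with ŝ = T / λ̂. Then the traffic-intensity constraint λ̂·ŝ ≤ ρ(d) holds if and only if the linear constraint T ≤ Σ_{n=1}^{N} (ρ(n) − ρ(n−1))·z(n) holds. -/
lemma step_sum_eq (ρ : ℕ → ℝ) (hρ0 : ρ 0 = 0) :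
    ∀ N (z : ℕ → ℕ), (∀ n ∈ Finset.Icc 1 N, z n = 0 ∨ z n = 1) →
      (∀ n ∈ Finset.Icc 2 N, z n ≤ z (n - 1)) →
      ∑ n ∈ Finset.Icc 1 N, (ρ n - ρ (n - 1)) * (z n : ℝ)
        = ρ (∑ n ∈ Finset.Icc 1 N, z n) := by
  intro N
  induction N with
  | zero => intro z _ _; simp [hρ0]
  | succ N ih =>
    intro z hbin hord
    have hmem : N + 1 ∈ Finset.Icc 1 (N + 1) := by simp
    rcases hbin _ hmem with h0 | h1
    · have hsplit : Finset.Icc 1 (N + 1) = insert (N + 1) (Finset.Icc 1 N) := by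
        rw [← Finset.insert_Icc_right_eq_Icc_add_one (by omega)]
      have hni : N + 1 ∉ Finset.Icc 1 N := by simp
      rw [hsplit, Finset.sum_insert hni, Finset.sum_insert hni, h0]
      simp only [Nat.cast_zero, mul_zero, zero_add]
      exact ih z (fun n hn => hbin n (by simp at hn ⊢; omega))
        (fun n hn => hord n (by simp at hn ⊢; omega))
    · -- all z n = 1 for n in Icc 1 (N+1)
      have hall : ∀ n ∈ Finset.Icc 1 (N + 1), z n = 1 := by
        intro n hn
        simp only [Finset.mem_Icc] at hn
        have hle : ∀ m, n ≤ m → m ≤ N + 1 → z m ≤ z n := by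
          intro m hm
          induction m with
          | zero => intro; omega
          | succ k ihk =>
            intro hk
            rcases Nat.lt_or_ge n (k + 1) with h | h
            · have : z (k + 1) ≤ z k := by
                have := hord (k + 1) (by simp; omega)
                simpa using this
              exact le_trans this (ihk (by omega) (by omega))
            · have : n = k + 1 := by omega
              simp [this]
        have h1' : 1 ≤ z n := by
          have := hle (N + 1) hn.2 le_rfl
          omega
        rcases hbin n (by simp [hn.1, hn.2]) with h | h <;> omega
      have hsum1 : ∑ n ∈ Finset.Icc 1 (N + 1), z n = N + 1 := by
        rw [Finset.sum_congr rfl hall]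
        simp
      rw [hsum1]
      have : ∑ n ∈ Finset.Icc 1 (N + 1), (ρ n - ρ (n - 1)) * (z n : ℝ)
          = ∑ n ∈ Finset.Icc 1 (N + 1), (ρ n - ρ (n - 1)) := by
        apply Finset.sum_congr rfl
        intro n hn
        rw [hall n hn]; simp
      rw [this]
      have hrw : ∑ n ∈ Finset.Icc 1 (N + 1), (ρ n - ρ (n - 1))
          = ∑ i ∈ Finset.range (N + 1), (ρ (i + 1) - ρ i) := by
        rw [show Finset.Icc 1 (N + 1) = Finset.Ico 1 (N + 2) by rfl,
          Finset.sum_Ico_eq_sum_range]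
        apply Finset.sum_congr rfl
        intro i _
        simp [Nat.add_comm]
      rw [hrw, Finset.sum_range_sub, hρ0, sub_zero]

/-- Let `N ≥ 1`, `ρ : {0, …, N} → ℝ` with `ρ(0) = 0`, and `z : {1, …, N} → {0, 1}` satisfy
`z(n) ≤ z(n−1)` for `n ∈ {2, …, N}`, with `d = Σ_{n=1}^{N} z(n)`. Let `T ≥ 0` and `λ̂ > 0`
be reals with `ŝ = T / λ̂`. Then the traffic-intensity constraint `λ̂·ŝ ≤ ρ(d)` holds iff
the linear constraint `T ≤ Σ_{n=1}^{N} (ρ(n) − ρ(n−1))·z(n)` holds. -/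
theorem traffic_intensity_constraint_iff_linear (N : ℕ) (hN : 1 ≤ N) (ρ : ℕ → ℝ)
    (hρ0 : ρ 0 = 0) (z : ℕ → ℕ)
    (hbin : ∀ n ∈ Finset.Icc 1 N, z n = 0 ∨ z n = 1)
    (hord : ∀ n ∈ Finset.Icc 2 N, z n ≤ z (n - 1))
    (T lam shat : ℝ) (hT : 0 ≤ T) (hlam : 0 < lam) (hs : shat = T / lam) :
    lam * shat ≤ ρ (∑ n ∈ Finset.Icc 1 N, z n) ↔
      T ≤ ∑ n ∈ Finset.Icc 1 N, (ρ n - ρ (n - 1)) * (z n : ℝ) := by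
  have hls : lam * shat = T := by
    rw [hs]; field_simp
  rw [hls, step_sum_eq ρ hρ0 N z hbin hord]
end
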